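/- In the reduction trace from Unary 3-Partition, any legal schedule respecting program order must schedule reads and writes alternately: since the number of reads in P₀ equals the total number of writes in all other processes, each write is the dictating write of exactly one read, and consecutive reads of the same value must consume distinct writes of that value. -/

import Mathlib

/-- An operation: a read or write on variable `var` with value `val` (the issuing
process is given by the position of the operation in the trace). -/
structure Op where
  isRead : Bool
  var : ℕ
  val : ℕ
deriving DecidableEq

/-- Write of value `v` to the single shared variable `x` (variable `0`). -/
def Wr (v : ℕ) : Op := ⟨false, 0, v⟩

/-- Read of value `v` from the single shared variable `x` (variable `0`). -/
def Rd (v : ℕ) : Op := ⟨true, 0, v⟩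

/-- Values `a, a', b, b', c, c'` are the six distinct integers `1,…,6`. -/
def va : ℕ := 1
def va' : ℕ := 2
def vb : ℕ := 3
def vb' : ℕ := 4
def vc : ℕ := 5
def vc' : ℕ := 6

/-- Open subsequence `Rxa Rxa' Rxa Rxa' Rxa Rxa'`. -/
def openSeq : List Op := [Rd va, Rd va', Rd va, Rd va', Rd va, Rd va']

/-- Sum subsequence `(Rxb Rxb')^B`. -/
def sumSeq (B : ℕ) : List Op := (List.replicate B [Rd vb, Rd vb']).flatten

/-- Close subsequence `Rxc Rxc' Rxc Rxc' Rxc Rxc'`. -/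
def closeSeq : List Op := [Rd vc, Rd vc', Rd vc, Rd vc', Rd vc, Rd vc']

/-- The read-only process `P₀`: `m` slot sequences. -/
def P0 (m B : ℕ) : List Op := (List.replicate m (openSeq ++ sumSeq B ++ closeSeq)).flatten

/-- Process `P_{aᵢ}`: `Wxa'`, then `s(aᵢ)` copies of `Wxb'`, then `Wxc'`. -/
def Pa (sz : ℕ) : List Op := Wr va' :: (List.replicate sz (Wr vb') ++ [Wr vc'])

/-- The trace of the reduction from Unary 3-Partition: `P₀`, the processes
`P_{a₁},…,P_{a_{3m}}`, and the auxiliary processes `P_{c₁} = (Wxa)^{3m}`,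
`P_{c₂} = (Wxb)^{mB}`, `P_{c₃} = (Wxc)^{3m}`. -/
def reductionTrace (m B : ℕ) (s : Fin (3 * m) → ℕ) : List (List Op) :=
  P0 m B :: (List.ofFn (fun i => Pa (s i)) ++
    [List.replicate (3 * m) (Wr va), List.replicate (m * B) (Wr vb),
     List.replicate (3 * m) (Wr vc)])

/-- A position of an operation in a trace: a process index and an index in that
process's sequence. -/
def Pos (procs : List (List Op)) : Type := Σ i : Fin procs.length, Fin ((procs.get i).length)

/-- The operation at a position of the trace. -/
def opAt {procs : List (List Op)} (p : Pos procs) : Op := (procs.get p.1).get p.2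

/-- `σ` numbers the operations of the trace as a legal schedule respecting program
order: it is injective, operations of the same process keep their order, and every
read reads the value of the latest preceding write on the same variable. -/
def LegalSched (procs : List (List Op)) (σ : Pos procs → ℕ) : Prop :=
  Function.Injective σ ∧
  (∀ p q : Pos procs, p.1.val = q.1.val → p.2.val < q.2.val → σ p < σ q) ∧
  (∀ p : Pos procs, (opAt p).isRead = true →
    ∃ q : Pos procs, (opAt q).isRead = false ∧ σ q < σ p ∧
      (opAt q).var = (opAt p).var ∧ (opAt q).val = (opAt p).val ∧
      ∀ q' : Pos procs, (opAt q').isRead = false → (opAt q').var = (opAt p).var →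
        σ q < σ q' → ¬ σ q' < σ p)

/-- A solution of the 3-Partition instance: an assignment of the `3m` elements to `m`
triples, each summing to `B`. -/
def ThreePartSol (m B : ℕ) (s : Fin (3 * m) → ℕ) : Prop :=
  ∃ f : Fin (3 * m) → Fin m,
    (∀ j : Fin m, (Finset.univ.filter (fun i => f i = j)).card = 3) ∧
    (∀ j : Fin m, ∑ i ∈ Finset.univ.filter (fun i => f i = j), s i = B)

/-!
Every read of `P₀` has a dictating write: the latest write scheduled before it. Two reads
cannot share one. If reads `p` before `p'` of `P₀` had the same dictating write `w`, the read
right after `p` in `P₀` is scheduled between `p` and `p'`, so `w` dictates it too and it reads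
the value of `p`; but adjacent reads of `P₀` have different values. Dictation is thus an
injection from reads into writes, and as both number `2mB + 12m` it is a bijection.
-/

instance (procs : List (List Op)) : Fintype (Pos procs) :=
  inferInstanceAs (Fintype (Σ i : Fin procs.length, Fin ((procs.get i).length)))

lemma Pos.card_eq_sum_length (procs : List (List Op)) :
    Fintype.card (Pos procs) = (procs.map List.length).sum := by
  change Fintype.card (Σ i : Fin procs.length, Fin ((procs.get i).length)) = _
  rw [Fintype.card_sigma, ← List.sum_ofFn]
  simp [List.ofFn_getElem_eq_map]

lemma Pos.card_subtype_fst_eq {procs : List (List Op)} (i : Fin procs.length) :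
    Fintype.card {p : Pos procs // p.1 = i} = (procs.get i).length := by
  change Fintype.card {s : Σ i : Fin procs.length, Fin ((procs.get i).length) // s.1 = i} = _
  rw [Fintype.card_congr (Equiv.sigmaSubtype i), Fintype.card_fin]

def Dictates {procs : List (List Op)} (σ : Pos procs → ℕ) (q p : Pos procs) : Prop :=
  σ q < σ p ∧ ∀ q' : Pos procs, (opAt q').isRead = false → σ q' < σ p → σ q' ≤ σ q

section Dictates

variable {procs : List (List Op)} {σ : Pos procs → ℕ} {p q q' r : Pos procs}

lemma Dictates.of_le (h : Dictates σ q p) (hqr : σ q < σ r) (hrp : σ r ≤ σ p) :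
    Dictates σ q r :=
  ⟨hqr, fun q' hq' hlt => h.2 q' hq' (hlt.trans_le hrp)⟩

lemma Dictates.eq (hinj : Function.Injective σ) (hq : (opAt q).isRead = false)
    (hq' : (opAt q').isRead = false) (h : Dictates σ q p) (h' : Dictates σ q' p) : q = q' :=
  hinj (le_antisymm (h'.2 q hq h.1) (h.2 q' hq' h'.1))

end Dictates

namespace LegalSched

variable {procs : List (List Op)} {σ : Pos procs → ℕ} (hleg : LegalSched procs σ)
include hleg

lemma strictMono_proc (i : Fin procs.length) :
    StrictMono fun j : Fin (procs.get i).length => σ ⟨i, j⟩ :=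
  fun _ _ hjk => hleg.2.1 _ _ rfl hjk

variable (hvar : ∀ p q : Pos procs, (opAt p).var = (opAt q).var)
include hvar

lemma exists_dictates {p : Pos procs} (hp : (opAt p).isRead = true) :
    ∃ q, (opAt q).isRead = false ∧ Dictates σ q p ∧ (opAt q).val = (opAt p).val := by
  obtain ⟨q, hq, hqp, -, hval, hlast⟩ := hleg.2.2 p hp
  exact ⟨q, hq, ⟨hqp, fun q' hq' hq'p => not_lt.1 fun hqq' =>
    hlast q' hq' (hvar q' p) hqq' hq'p⟩, hval⟩

lemma val_eq_of_dictates {p q : Pos procs} (hp : (opAt p).isRead = true)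
    (hq : (opAt q).isRead = false) (h : Dictates σ q p) : (opAt q).val = (opAt p).val := by
  obtain ⟨q₀, hq₀, h₀, hval⟩ := hleg.exists_dictates hvar hp
  rwa [h.eq hleg.1 hq hq₀ h₀]

variable {i : Fin procs.length} (hreader : ∀ p : Pos procs, (opAt p).isRead = true ↔ p.1 = i)
  (hchain : (procs.get i).IsChain fun o o' => o.val ≠ o'.val)
include hreader hchain

lemma not_dictates_of_lt {p p' q : Pos procs} (hp : (opAt p).isRead = true)
    (hp' : (opAt p').isRead = true) (hq : (opAt q).isRead = false) (hpp' : σ p < σ p')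
    (h : Dictates σ q p) (h' : Dictates σ q p') : False := by
  obtain ⟨k, j⟩ := p
  obtain ⟨k', j'⟩ := p'
  obtain rfl : k = i := (hreader _).1 hp
  obtain rfl : k = k' := ((hreader _).1 hp').symm
  have hmono := hleg.strictMono_proc k
  have hjj' : j < j' := hmono.lt_iff_lt.1 hpp'
  let next : Fin (procs.get k).length := ⟨j + 1, by omega⟩
  have hnext : (opAt (⟨k, next⟩ : Pos procs)).isRead = true := (hreader _).2 rfl
  have h_next : Dictates σ q ⟨k, next⟩ :=
    h'.of_le (h.1.trans (hmono (Fin.lt_def.2 j.val.lt_succ_self)))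
      (hmono.monotone (Fin.le_def.2 hjj'))
  refine List.isChain_iff_getElem.1 hchain j (by omega) ?_
  exact (hleg.val_eq_of_dictates hvar hp hq h).symm.trans
    (hleg.val_eq_of_dictates hvar hnext hq h_next)

lemma eq_of_dictates {p p' q : Pos procs} (hp : (opAt p).isRead = true)
    (hp' : (opAt p').isRead = true) (hq : (opAt q).isRead = false)
    (h : Dictates σ q p) (h' : Dictates σ q p') : p = p' := by
  rcases lt_trichotomy (σ p) (σ p') with hlt | heq | hgt
  · exact (hleg.not_dictates_of_lt hvar hreader hchain hp hp' hq hlt h h').elim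
  · exact hleg.1 heq
  · exact (hleg.not_dictates_of_lt hvar hreader hchain hp' hp hq hgt h' h).elim

theorem existsUnique_dictates
    (hcard : Fintype.card {p : Pos procs // (opAt p).isRead = true} =
      Fintype.card {q : Pos procs // (opAt q).isRead = false})
    (q : Pos procs) (hq : (opAt q).isRead = false) :
    ∃! p : Pos procs, (opAt p).isRead = true ∧ Dictates σ q p := by
  choose d hd_write hd using fun p : {p : Pos procs // (opAt p).isRead = true} =>
    hleg.exists_dictates hvar p.2
  let dictating : {p : Pos procs // (opAt p).isRead = true} →
      {q : Pos procs // (opAt q).isRead = false} := fun p => ⟨d p, hd_write p⟩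
  have hinj : Function.Injective dictating := fun p p' hpp' => by
    have hdpp' : d p = d p' := congrArg Subtype.val hpp'
    refine Subtype.ext
      (hleg.eq_of_dictates hvar hreader hchain p.2 p'.2 (hd_write p) (hd p).1 ?_)
    rw [hdpp']
    exact (hd p').1
  have hbij := (Fintype.bijective_iff_injective_and_card dictating).2 ⟨hinj, hcard⟩
  obtain ⟨p, hp⟩ := hbij.2 ⟨q, hq⟩
  have hdp : Dictates σ q p := by
    rw [← show d p = q from congrArg Subtype.val hp]
    exact (hd p).1
  exact ⟨p, ⟨p.2, hdp⟩,
    fun p' ⟨hp', h'⟩ => hleg.eq_of_dictates hvar hreader hchain hp' p.2 hq h' hdp⟩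

end LegalSched

section P0

variable {m B : ℕ}

lemma isChain_sumSeq (B : ℕ) : (sumSeq B).IsChain fun o o' => o.val ≠ o'.val := by
  rw [sumSeq, List.isChain_flatten (by simp)]
  exact ⟨by simp [Rd, vb, vb'], List.isChain_replicate_of_rel _ (by simp [Rd, vb, vb'])⟩

lemma val_le_of_mem_sumSeq {o : Op} (ho : o ∈ sumSeq B) : 3 ≤ o.val ∧ o.val ≤ 4 := by
  simp only [sumSeq, List.mem_flatten, List.mem_replicate] at ho
  obtain ⟨l, ⟨-, rfl⟩, ho⟩ := ho
  simp only [List.mem_cons, List.not_mem_nil, or_false] at ho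
  rcases ho with rfl | rfl <;> simp [Rd, vb, vb']

/-- Adjacent values differ across the block boundaries because the values of `openSeq`,
`sumSeq B` and `closeSeq` lie in `{1,2}`, `{3,4}` and `{5,6}`. -/
lemma isChain_block (B : ℕ) :
    (openSeq ++ sumSeq B ++ closeSeq).IsChain fun o o' => o.val ≠ o'.val := by
  refine ((List.IsChain.append ?_ (isChain_sumSeq B) ?_).append ?_ ?_)
  · simp [openSeq, Rd, va, va']
  · intro x hx y hy
    have := (val_le_of_mem_sumSeq (List.mem_of_mem_head? hy)).1
    simp only [openSeq, List.getLast?_cons_cons, List.getLast?_singleton, Option.mem_def,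
      Option.some.injEq] at hx
    subst hx
    simp only [Rd, va']
    omega
  · simp [closeSeq, Rd, vc, vc']
  · intro x hx y hy
    simp only [closeSeq, List.head?_cons, Option.mem_def, Option.some.injEq] at hy
    subst hy
    have hx := List.mem_of_mem_getLast? hx
    simp only [List.mem_append] at hx
    rcases hx with hx | hx
    · simp only [openSeq, List.mem_cons, List.not_mem_nil, or_false] at hx
      rcases hx with rfl | rfl | rfl | rfl | rfl | rfl <;> simp [Rd, va, va', vc]
    · have := (val_le_of_mem_sumSeq hx).2
      simp only [Rd, vc]
      omega

lemma isChain_P0 (m B : ℕ) : (P0 m B).IsChain fun o o' => o.val ≠ o'.val := by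
  rw [P0, List.isChain_flatten (by simp [openSeq])]
  refine ⟨by simpa using fun _ => isChain_block B, List.isChain_replicate_of_rel _ ?_⟩
  intro x hx y hy
  rw [List.getLast?_append_of_ne_nil _ (by simp [closeSeq])] at hx
  simp only [closeSeq, List.getLast?_cons_cons, List.getLast?_singleton, Option.mem_def,
    Option.some.injEq] at hx
  simp only [openSeq, List.cons_append, List.head?_cons, Option.mem_def, Option.some.injEq] at hy
  subst hx hy
  simp [Rd, va, vc']

lemma exists_eq_rd_of_mem_P0 {o : Op} (ho : o ∈ P0 m B) : ∃ v, o = Rd v := by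
  simp only [P0, sumSeq, openSeq, closeSeq, List.mem_flatten, List.mem_replicate] at ho
  aesop

lemma length_P0 (m B : ℕ) : (P0 m B).length = m * (2 * B + 12) := by
  simp [P0, sumSeq, openSeq, closeSeq, List.sum_replicate, mul_comm B 2]

end P0

namespace reductionTrace

variable {m B : ℕ} {s : Fin (3 * m) → ℕ}

lemma exists_eq_wr_of_mem_tail {l : List Op} (hl : l ∈ (reductionTrace m B s).tail) {o : Op}
    (ho : o ∈ l) : ∃ v, o = Wr v := by
  simp only [reductionTrace, List.tail_cons, List.mem_append, List.mem_ofFn] at hl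
  aesop (add simp Pa)

lemma opAt_eq_rd_or_wr (p : Pos (reductionTrace m B s)) :
    (p.1.val = 0 ∧ ∃ v, opAt p = Rd v) ∨ (p.1.val ≠ 0 ∧ ∃ v, opAt p = Wr v) := by
  obtain ⟨⟨k, hk⟩, j⟩ := p
  have hmem : opAt (⟨⟨k, hk⟩, j⟩ : Pos (reductionTrace m B s)) ∈
      (reductionTrace m B s)[k] := List.get_mem _ _
  cases k with
  | zero => exact .inl ⟨rfl, exists_eq_rd_of_mem_P0 hmem⟩
  | succ k =>
    have hk' : k < (reductionTrace m B s).tail.length := by rw [List.length_tail]; omega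
    exact .inr ⟨k.succ_ne_zero, exists_eq_wr_of_mem_tail (List.getElem_mem hk') hmem⟩

lemma var_opAt (p : Pos (reductionTrace m B s)) : (opAt p).var = 0 := by
  rcases opAt_eq_rd_or_wr p with ⟨-, v, hv⟩ | ⟨-, v, hv⟩ <;> rw [hv] <;> rfl

lemma isRead_opAt_iff (p : Pos (reductionTrace m B s)) :
    (opAt p).isRead = true ↔ p.1 = ⟨0, by simp [reductionTrace]⟩ := by
  rw [Fin.ext_iff]
  rcases opAt_eq_rd_or_wr p with ⟨h0, v, hv⟩ | ⟨h0, v, hv⟩ <;> simp [hv, h0, Rd, Wr]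

lemma card_pos (hsum : ∑ i, s i = m * B) :
    Fintype.card (Pos (reductionTrace m B s)) = 2 * (P0 m B).length := by
  rw [Pos.card_eq_sum_length]
  simp [reductionTrace, Pa, List.sum_ofFn, Finset.sum_add_distrib, hsum, length_P0]
  ring

lemma card_reads_eq_card_writes (hsum : ∑ i, s i = m * B) :
    Fintype.card {p : Pos (reductionTrace m B s) // (opAt p).isRead = true} =
      Fintype.card {q : Pos (reductionTrace m B s) // (opAt q).isRead = false} := by
  have hreads : Fintype.card {p : Pos (reductionTrace m B s) // (opAt p).isRead = true} =
      (P0 m B).length := by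
    rw [Fintype.card_congr (Equiv.subtypeEquivRight isRead_opAt_iff), Pos.card_subtype_fst_eq]
    rfl
  simp only [← Bool.not_eq_true]
  rw [Fintype.card_subtype_compl, card_pos hsum, hreads]
  omega

end reductionTrace

theorem stmt11_general (m B : ℕ) (s : Fin (3 * m) → ℕ)
    (hsum : ∑ i, s i = m * B)
    (σ : Pos (reductionTrace m B s) → ℕ)
    (hleg : LegalSched (reductionTrace m B s) σ) :
    ∀ q : Pos (reductionTrace m B s), (opAt q).isRead = false →
      ∃! p : Pos (reductionTrace m B s), (opAt p).isRead = true ∧ σ q < σ p ∧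
        ∀ q' : Pos (reductionTrace m B s), (opAt q').isRead = false →
          σ q' < σ p → σ q' ≤ σ q :=
  hleg.existsUnique_dictates
    (fun p q => (reductionTrace.var_opAt p).trans (reductionTrace.var_opAt q).symm)
    reductionTrace.isRead_opAt_iff (isChain_P0 m B) (reductionTrace.card_reads_eq_card_writes hsum)

/-- In any legal program-order-respecting schedule of the reduction trace, reads and
writes must alternate: each write is the dictating write of exactly one read, i.e. for
every write position `q` there is exactly one read position `p` such that `q` is the
latest write preceding `p` in the schedule (its value then matches by legality). -/
theorem stmt11 (m B : ℕ) (s : Fin (3 * m) → ℕ) (hm : 0 < m)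
    (hsize : ∀ i, B < 4 * s i ∧ 2 * s i < B)
    (hsum : ∑ i, s i = m * B)
    (σ : Pos (reductionTrace m B s) → ℕ)
    (hleg : LegalSched (reductionTrace m B s) σ) :
    ∀ q : Pos (reductionTrace m B s), (opAt q).isRead = false →
      ∃! p : Pos (reductionTrace m B s), (opAt p).isRead = true ∧ σ q < σ p ∧
        ∀ q' : Pos (reductionTrace m B s), (opAt q').isRead = false →
          σ q' < σ p → σ q' ≤ σ q :=
  stmt11_general m B s hsum σ hleg
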